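/- arXiv:2307.03587 — 2 statements merged into one kernel-verified Lean document; each statement's English description precedes it below -/
import Mathlib

section
/- det(Σ̄_0)/det(Σ̄_t) ≤ ( 1 + trace(Σ̄_0)·L²·(Σ_{i=1}^t w_i^p)/(d σ²) )^d, where Σ̄_t := (Σ̄_t^{-1})^{-1}. -/
/-!
Write `A = Σ̄₀⁻¹ + M` with `M = σ⁻² Σ wᵢᵖ xᵢxᵢᵀ` positive semidefinite. Then
`det Σ̄₀ / det A⁻¹ = det Σ̄₀ · det A`, and writing `Σ̄₀ = XᵀX` this is `det (X A Xᵀ)`, which by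
AM-GM on the eigenvalues of `X A Xᵀ` is at most `(tr (Σ̄₀ A) / d) ^ d`. Finally
`tr (Σ̄₀ A) = d + tr (Σ̄₀ M) ≤ d + tr Σ̄₀ · tr M` and `tr M ≤ σ⁻² L² Σ wᵢᵖ`.
-/

open Matrix Finset

theorem Real.prod_le_sum_div_card_pow {ι : Type*} (s : Finset ι) {z : ι → ℝ}
    (hz : ∀ i ∈ s, 0 ≤ z i) : ∏ i ∈ s, z i ≤ ((∑ i ∈ s, z i) / #s) ^ #s := by
  rcases s.eq_empty_or_nonempty with rfl | hs
  · simp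
  have hcard : #s ≠ 0 := hs.card_pos.ne'
  have amgm := Real.geom_mean_le_arith_mean_weighted s (fun _ => (#s : ℝ)⁻¹) z
    (fun _ _ => by positivity) (by simp [hcard]) hz
  rw [Real.finsetProd_rpow _ _ hz, ← Finset.mul_sum, inv_mul_eq_div] at amgm
  calc ∏ i ∈ s, z i = ((∏ i ∈ s, z i) ^ (#s : ℝ)⁻¹) ^ #s :=
        (Real.rpow_inv_natCast_pow (prod_nonneg hz) hcard).symm
    _ ≤ _ := pow_le_pow_left₀ (Real.rpow_nonneg (prod_nonneg hz) _) amgm _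

namespace Matrix

variable {n : Type*} [Fintype n]

theorem posSemidef_sum_smul_vecMulVec_self {ι : Type*} (s : Finset ι) {c : ι → ℝ}
    (hc : ∀ i ∈ s, 0 ≤ c i) (x : ι → n → ℝ) :
    (∑ i ∈ s, c i • vecMulVec (x i) (x i)).PosSemidef :=
  posSemidef_sum s fun i hi =>
    (by simpa using posSemidef_vecMulVec_self_star (x i) : (vecMulVec (x i) (x i)).PosSemidef).smul
      (hc i hi)

theorem trace_sum_smul_vecMulVec_self_le {ι : Type*} (s : Finset ι) {c : ι → ℝ}
    (hc : ∀ i ∈ s, 0 ≤ c i) {x : ι → n → ℝ} {r : ℝ} (hx : ∀ i ∈ s, x i ⬝ᵥ x i ≤ r) :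
    (∑ i ∈ s, c i • vecMulVec (x i) (x i)).trace ≤ r * ∑ i ∈ s, c i := by
  rw [trace_sum, mul_sum]
  refine sum_le_sum fun i hi => ?_
  rw [trace_smul, trace_vecMulVec, smul_eq_mul, mul_comm]
  exact mul_le_mul_of_nonneg_right (hx i hi) (hc i hi)

namespace PosSemidef

omit [Fintype n] in
theorem sq_apply_le_mul_diag {A : Matrix n n ℝ} (hA : A.PosSemidef) (i j : n) :
    A i j ^ 2 ≤ A i i * A j j := by
  have h := (hA.submatrix ![i, j]).det_nonneg
  rw [det_fin_two] at h
  have hsymm : A j i = A i j := hA.isHermitian.apply i j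
  simp [hsymm] at h
  nlinarith

theorem trace_mul_le_trace_mul_trace {A B : Matrix n n ℝ} (hA : A.PosSemidef)
    (hB : B.PosSemidef) : (A * B).trace ≤ A.trace * B.trace := by
  have entry (i j : n) : A i j * B j i ≤ (A i i * B j j + A j j * B i i) / 2 := by
    have hAii : 0 ≤ A i i := hA.diag_nonneg
    have hAjj : 0 ≤ A j j := hA.diag_nonneg
    have hBii : 0 ≤ B i i := hB.diag_nonneg
    have hBjj : 0 ≤ B j j := hB.diag_nonneg
    have hsq : (A i j * B j i) ^ 2 ≤ (A i i * B j j) * (A j j * B i i) := by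
      have := mul_le_mul (hA.sq_apply_le_mul_diag i j) (hB.sq_apply_le_mul_diag j i)
        (sq_nonneg _) (mul_nonneg hAii hAjj)
      linarith
    nlinarith [sq_nonneg (A i i * B j j - A j j * B i i), mul_nonneg hAii hBjj,
      mul_nonneg hAjj hBii]
  calc (A * B).trace = ∑ i, ∑ j, A i j * B j i := by simp [trace, mul_apply]
    _ ≤ ∑ i, ∑ j, (A i i * B j j + A j j * B i i) / 2 :=
        sum_le_sum fun i _ => sum_le_sum fun j _ => entry i j
    _ = A.trace * B.trace := by
        simp only [trace, Matrix.diag, add_div, sum_add_distrib, ← sum_div, ← mul_sum, ← sum_mul]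
        ring

variable [DecidableEq n]

theorem det_le_trace_div_card_pow {A : Matrix n n ℝ} (hA : A.PosSemidef) :
    A.det ≤ (A.trace / Fintype.card n) ^ Fintype.card n := by
  rw [hA.isHermitian.det_eq_prod_eigenvalues, hA.isHermitian.trace_eq_sum_eigenvalues]
  simpa using Real.prod_le_sum_div_card_pow univ fun i _ => hA.eigenvalues_nonneg i

open scoped MatrixOrder in
theorem trace_mul_nonneg {S A : Matrix n n ℝ} (hS : S.PosSemidef) (hA : A.PosSemidef) :
    0 ≤ (S * A).trace := by
  obtain ⟨X, rfl⟩ := CStarAlgebra.nonneg_iff_eq_star_mul_self.mp hS.nonneg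
  rw [star_eq_conjTranspose, ← trace_mul_cycle]
  exact (hA.mul_mul_conjTranspose_same X).trace_nonneg

open scoped MatrixOrder in
theorem det_mul_det_le_trace_mul_div_card_pow {S A : Matrix n n ℝ} (hS : S.PosSemidef)
    (hA : A.PosSemidef) :
    S.det * A.det ≤ ((S * A).trace / Fintype.card n) ^ Fintype.card n := by
  obtain ⟨X, rfl⟩ := CStarAlgebra.nonneg_iff_eq_star_mul_self.mp hS.nonneg
  calc (star X * X).det * A.det = (X * A * Xᴴ).det := by
        simp only [star_eq_conjTranspose, det_mul]; ring
    _ ≤ _ := (hA.mul_mul_conjTranspose_same X).det_le_trace_div_card_pow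
    _ = _ := by rw [trace_mul_cycle, star_eq_conjTranspose]

end PosSemidef

end Matrix

theorem stmt5_general (d t p : ℕ)
    (σ L : ℝ)
    (x : ℕ → Fin d → ℝ) (hx : ∀ i ∈ Finset.Icc 1 t, Real.sqrt (x i ⬝ᵥ x i) ≤ L)
    (w : ℕ → ℝ) (hw : ∀ i ∈ Finset.Icc 1 t, 0 < w i)
    (S0 : Matrix (Fin d) (Fin d) ℝ) (hS0 : S0.PosDef) :
    S0.det /
        ((S0⁻¹ + (σ ^ 2)⁻¹ • ∑ i ∈ Finset.Icc 1 t, w i ^ p • vecMulVec (x i) (x i))⁻¹).det ≤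
      (1 + S0.trace * L ^ 2 * (∑ i ∈ Finset.Icc 1 t, w i ^ p) / (d * σ ^ 2)) ^ d := by
  have hwp : ∀ i ∈ Icc 1 t, 0 ≤ w i ^ p := fun i hi => (pow_pos (hw i hi) p).le
  have hxL : ∀ i ∈ Icc 1 t, x i ⬝ᵥ x i ≤ L ^ 2 := fun i hi => (Real.sqrt_le_iff.mp (hx i hi)).2
  set M := (σ ^ 2)⁻¹ • ∑ i ∈ Icc 1 t, w i ^ p • vecMulVec (x i) (x i)
  have hM : M.PosSemidef := (posSemidef_sum_smul_vecMulVec_self _ hwp x).smul (by positivity)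
  have hA : (S0⁻¹ + M).PosSemidef := hS0.inv.posSemidef.add hM
  have htrM : M.trace ≤ (σ ^ 2)⁻¹ * (L ^ 2 * ∑ i ∈ Icc 1 t, w i ^ p) := by
    rw [trace_smul, smul_eq_mul]
    gcongr
    exact trace_sum_smul_vecMulVec_self_le _ hwp hxL
  have htr : (S0 * (S0⁻¹ + M)).trace = d + (S0 * M).trace := by
    rw [Matrix.mul_add, mul_nonsing_inv _ (isUnit_iff_ne_zero.mpr hS0.det_pos.ne'), trace_add,
      trace_one, Fintype.card_fin]
  have hmean : (S0 * (S0⁻¹ + M)).trace / d ≤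
      1 + S0.trace * L ^ 2 * (∑ i ∈ Icc 1 t, w i ^ p) / (d * σ ^ 2) :=
    calc (S0 * (S0⁻¹ + M)).trace / d ≤ 1 + (S0 * M).trace / d := by
          -- only `≤` because `d / d = 0` when `d = 0`
          rw [htr, add_div]; gcongr; exact div_self_le_one _
      _ ≤ 1 + S0.trace * ((σ ^ 2)⁻¹ * (L ^ 2 * ∑ i ∈ Icc 1 t, w i ^ p)) / d := by
          gcongr
          exact (hS0.posSemidef.trace_mul_le_trace_mul_trace hM).trans
            (mul_le_mul_of_nonneg_left htrM hS0.posSemidef.trace_nonneg)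
      _ = _ := by ring
  rw [det_nonsing_inv, Ring.inverse_eq_inv', div_inv_eq_mul]
  calc S0.det * (S0⁻¹ + M).det ≤ ((S0 * (S0⁻¹ + M)).trace / d) ^ d := by
        simpa using hS0.posSemidef.det_mul_det_le_trace_mul_div_card_pow hA
    _ ≤ _ := pow_le_pow_left₀ (div_nonneg (hS0.posSemidef.trace_mul_nonneg hA) d.cast_nonneg)
        hmean d

theorem stmt5 (d t p : ℕ) (hd : 1 ≤ d) (ht : 1 ≤ t) (hp : 1 ≤ p)
    (σ L : ℝ) (hσ : 0 < σ) (hL : 0 ≤ L)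
    (x : ℕ → Fin d → ℝ) (hx : ∀ i ∈ Finset.Icc 1 t, Real.sqrt (x i ⬝ᵥ x i) ≤ L)
    (w : ℕ → ℝ) (hw : ∀ i ∈ Finset.Icc 1 t, 0 < w i)
    (S0 : Matrix (Fin d) (Fin d) ℝ) (hS0 : S0.PosDef) :
    S0.det /
        ((S0⁻¹ + (σ ^ 2)⁻¹ • ∑ i ∈ Finset.Icc 1 t, w i ^ p • vecMulVec (x i) (x i))⁻¹).det ≤
      (1 + S0.trace * L ^ 2 * (∑ i ∈ Finset.Icc 1 t, w i ^ p) / (d * σ ^ 2)) ^ d :=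
  stmt5_general d t p σ L x hx w hw S0 hS0
end

section
/- Σ_t Σ̃_t^{-1} Σ_t ⪯ w_t Σ_t, where A ⪯ B means that B − A is positive semidefinite. -/
open Matrix Finset

/-- `Σ_t := (Σ_0⁻¹ + σ⁻² ∑ᵢ wᵢ xᵢxᵢᵀ)⁻¹` -/
noncomputable def SigM (d : ℕ) (σ : ℝ) (w : ℕ → ℝ) (x : ℕ → Fin d → ℝ)
    (S0 : Matrix (Fin d) (Fin d) ℝ) (t : ℕ) : Matrix (Fin d) (Fin d) ℝ :=
  (S0⁻¹ + (σ ^ 2)⁻¹ • ∑ i ∈ Finset.Icc 1 t, w i • vecMulVec (x i) (x i))⁻¹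

/-- `Σ̃_t := (w_t Σ_0⁻¹ + σ⁻² ∑ᵢ wᵢ² xᵢxᵢᵀ)⁻¹` -/
noncomputable def TilM (d : ℕ) (σ : ℝ) (w : ℕ → ℝ) (x : ℕ → Fin d → ℝ)
    (S0 : Matrix (Fin d) (Fin d) ℝ) (t : ℕ) : Matrix (Fin d) (Fin d) ℝ :=
  (w t • S0⁻¹ + (σ ^ 2)⁻¹ • ∑ i ∈ Finset.Icc 1 t, w i ^ 2 • vecMulVec (x i) (x i))⁻¹

/-!
Writing `A = Σ_t⁻¹` and `C = Σ̃_t⁻¹`, we have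
`w_t Σ_t - Σ_t Σ̃_t⁻¹ Σ_t = Σ_t (w_t A - C) Σ_t`, and
`w_t A - C = σ⁻² ∑ᵢ wᵢ (w_t - wᵢ) xᵢxᵢᵀ`, which is positive semidefinite because the weights
are positive and non-decreasing. Congruence by the symmetric matrix `Σ_t` preserves this.
-/

theorem Matrix.posSemidef_sum_smul_vecMulVec_self_s6 {ι n : Type*} [Fintype n] (s : Finset ι)
    (c : ι → ℝ) (x : ι → n → ℝ) (hc : ∀ i ∈ s, 0 ≤ c i) :
    (∑ i ∈ s, c i • vecMulVec (x i) (x i)).PosSemidef :=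
  posSemidef_sum s fun i hi => by
    simpa using (posSemidef_vecMulVec_self_star (x i)).smul (hc i hi)

open scoped ComplexOrder in
theorem Matrix.PosDef.posSemidef_smul_inv_sub_inv_mul_mul_inv {n 𝕜 : Type*} [Fintype n]
    [DecidableEq n] [RCLike 𝕜] {A C : Matrix n n 𝕜} (hA : A.PosDef) {c : 𝕜}
    (h : (c • A - C).PosSemidef) : (c • A⁻¹ - A⁻¹ * C * A⁻¹).PosSemidef := by
  have hAinv : A⁻¹ * A = 1 := nonsing_inv_mul _ ((isUnit_iff_isUnit_det _).mp hA.isUnit)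
  have hfactor : c • A⁻¹ - A⁻¹ * C * A⁻¹ = A⁻¹ * (c • A - C) * (A⁻¹)ᴴ := by
    rw [hA.inv.isHermitian.eq, Matrix.mul_sub, Matrix.sub_mul, Matrix.mul_smul, Matrix.smul_mul,
      hAinv, Matrix.one_mul]
  rw [hfactor]
  exact h.mul_mul_conjTranspose_same A⁻¹

theorem stmt6_general (d t : ℕ) (ht : 1 ≤ t) (σ : ℝ)
    (x : ℕ → Fin d → ℝ) (S0 : Matrix (Fin d) (Fin d) ℝ) (hS0 : S0.PosDef)
    (w : ℕ → ℝ) (hw1 : 0 < w 1) (hmono : ∀ i j, 1 ≤ i → i ≤ j → j ≤ t → w i ≤ w j) :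
    (w t • SigM d σ w x S0 t -
        SigM d σ w x S0 t * (TilM d σ w x S0 t)⁻¹ * SigM d σ w x S0 t).PosSemidef := by
  set V : ℕ → Matrix (Fin d) (Fin d) ℝ := fun i => vecMulVec (x i) (x i)
  set A := S0⁻¹ + (σ ^ 2)⁻¹ • ∑ i ∈ Icc 1 t, w i • V i
  set C := w t • S0⁻¹ + (σ ^ 2)⁻¹ • ∑ i ∈ Icc 1 t, w i ^ 2 • V i
  have hw : ∀ i ∈ Icc 1 t, 0 < w i ∧ w i ≤ w t := fun i hi => by
    obtain ⟨h1, h2⟩ := mem_Icc.mp hi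
    exact ⟨hw1.trans_le (hmono 1 i le_rfl h1 h2), hmono i t h1 h2 le_rfl⟩
  have hA : A.PosDef := hS0.inv.add_posSemidef <|
    (posSemidef_sum_smul_vecMulVec_self_s6 _ _ x fun i hi => (hw i hi).1.le).smul (by positivity)
  have hC : C.PosDef := (hS0.inv.smul (hw t (by simp [ht])).1).add_posSemidef <|
    (posSemidef_sum_smul_vecMulVec_self_s6 _ _ x fun i _ => sq_nonneg (w i)).smul (by positivity)
  have hgap : w t • A - C = (σ ^ 2)⁻¹ • ∑ i ∈ Icc 1 t, (w i * (w t - w i)) • V i := by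
    simp only [A, C, smul_add, smul_sum, smul_smul]
    rw [add_sub_add_left_eq_sub, ← sum_sub_distrib]
    exact sum_congr rfl fun i _ => by rw [← sub_smul]; ring_nf
  have hTil : (TilM d σ w x S0 t)⁻¹ = C :=
    nonsing_inv_nonsing_inv _ ((isUnit_iff_isUnit_det _).mp hC.isUnit)
  rw [hTil]
  refine hA.posSemidef_smul_inv_sub_inv_mul_mul_inv ?_
  rw [hgap]
  exact (posSemidef_sum_smul_vecMulVec_self_s6 _ _ x fun i hi =>
    mul_nonneg (hw i hi).1.le (sub_nonneg.mpr (hw i hi).2)).smul (by positivity)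

theorem stmt6 (d t : ℕ) (hd : 1 ≤ d) (ht : 1 ≤ t) (σ : ℝ) (hσ : 0 < σ)
    (x : ℕ → Fin d → ℝ) (S0 : Matrix (Fin d) (Fin d) ℝ) (hS0 : S0.PosDef)
    (w : ℕ → ℝ) (hw1 : 0 < w 1) (hmono : ∀ i j, 1 ≤ i → i ≤ j → j ≤ t → w i ≤ w j) :
    (w t • SigM d σ w x S0 t -
        SigM d σ w x S0 t * (TilM d σ w x S0 t)⁻¹ * SigM d σ w x S0 t).PosSemidef :=
  stmt6_general d t ht σ x S0 hS0 w hw1 hmono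
end
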